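/- Let G be an ordered mean, 𝔸 = [Aᵢⱼ] an n×k array of positive definite operators, ω ∈ Δₙ, λ ∈ Δₖ, and μ₁,…,μₙ ≥ 0. Then ∑ᵢ wᵢ·G^{μᵢ}ₖ(λ; 𝔸ⁱ) ≤ G^{ω•μ}ₖ(λ; ∑ᵢ wᵢ𝔸ⁱ), where ω•μ = ∑ᵢ wᵢμᵢ and ∑ᵢ wᵢ𝔸ⁱ denotes the tuple (∑ᵢ wᵢAᵢ₁, …, ∑ᵢ wᵢAᵢₖ). -/

import Mathlib

open ContinuousLinearMap in
/-- A positive definite (positive invertible) bounded operator on a Hilbert space. -/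
def IsPosDef {H : Type*} [NormedAddCommGroup H] [InnerProductSpace ℂ H] [CompleteSpace H]
    (A : H →L[ℂ] H) : Prop := A.IsPositive ∧ IsUnit A

/-- A positive probability vector. -/
def IsProbVec {n : ℕ} (w : Fin n → ℝ) : Prop := (∀ i, 0 < w i) ∧ ∑ i, w i = 1

/-- An ordered mean: a family of weighted means of positive definite operators satisfying
homogeneity, monotonicity, joint concavity and the arithmetic-`G`-harmonic mean inequalities
with respect to the Loewner order. -/
structure OrderedMean (H : Type*) [NormedAddCommGroup H] [InnerProductSpace ℂ H]
    [CompleteSpace H] where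
  G : ∀ n : ℕ, (Fin n → ℝ) → (Fin n → (H →L[ℂ] H)) → (H →L[ℂ] H)
  posDef : ∀ n w A, IsProbVec w → (∀ i, IsPosDef (A i)) → IsPosDef (G n w A)
  homog : ∀ n w A (a : ℝ), IsProbVec w → (∀ i, IsPosDef (A i)) → 0 < a →
    G n w (fun i => a • A i) = a • G n w A
  mono : ∀ n w A B, IsProbVec w → (∀ i, IsPosDef (A i)) → (∀ i, IsPosDef (B i)) →
    (∀ i, B i ≤ A i) → G n w B ≤ G n w A
  concave : ∀ n w A B (s : ℝ), IsProbVec w → (∀ i, IsPosDef (A i)) → (∀ i, IsPosDef (B i)) →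
    0 ≤ s → s ≤ 1 →
    (1 - s) • G n w A + s • G n w B ≤ G n w (fun i => (1 - s) • A i + s • B i)
  harm_le : ∀ n w A, IsProbVec w → (∀ i, IsPosDef (A i)) →
    Ring.inverse (∑ i, w i • Ring.inverse (A i)) ≤ G n w A
  le_arith : ∀ n w A, IsProbVec w → (∀ i, IsPosDef (A i)) →
    G n w A ≤ ∑ i, w i • A i

/-- The parameterized ordered mean `G^μ`. -/
noncomputable def OrderedMean.pMean {H : Type*} [NormedAddCommGroup H] [InnerProductSpace ℂ H]
    [CompleteSpace H] (G : OrderedMean H) (μ : ℝ) (n : ℕ) (w : Fin n → ℝ)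
    (A : Fin n → (H →L[ℂ] H)) : H →L[ℂ] H :=
  if 0 ≤ μ then G.G n w (fun i => A i + μ • 1) - μ • 1
  else Ring.inverse (G.G n w (fun i => Ring.inverse (A i) + (-μ) • 1) - (-μ) • 1)

/-- The constant `ρ_{M,m}(t)`. -/
noncomputable def rhoConst (M m t : ℝ) : ℝ :=
  if M / m ≤ t then (1 - t) * m
  else if t ≤ m / M then (1 - t) * M
  else M + m - 2 * Real.sqrt (t * M * m)

variable {H : Type*} [NormedAddCommGroup H] [InnerProductSpace ℂ H] [CompleteSpace H]

/-!
For `μ ≥ 0` the mean `G^μ` is `G` evaluated at the shifted tuple `A + μ I`, minus `μ I`. Shifting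
is affine, so the `w`-mixture of the shifted rows `𝔸ⁱ + μᵢ I` is `∑ᵢ wᵢ 𝔸ⁱ + (ω • μ) I`, and the
inequality is Jensen's inequality for the jointly concave map `G` on the convex set of `k`-tuples
of positive definite operators.
-/

open Set

theorem convex_setOf_isStrictlyPositive {A : Type*} [CStarAlgebra A] [PartialOrder A]
    [StarOrderedRing A] : Convex ℝ {a : A | IsStrictlyPositive a} := by
  intro a ha b hb s t hs ht hst
  rcases hs.eq_or_lt with rfl | hs
  · rw [zero_add] at hst
    simpa [hst] using hb
  · exact isStrictlyPositive_add <| .inl ⟨ha.smul hs, smul_nonneg ht hb.nonneg⟩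

theorem isPosDef_iff_isStrictlyPositive {A : H →L[ℂ] H} : IsPosDef A ↔ IsStrictlyPositive A := by
  rw [IsPosDef, IsStrictlyPositive.iff_of_unital, ContinuousLinearMap.nonneg_iff_isPositive]

theorem convex_setOf_isPosDef : Convex ℝ {A : H →L[ℂ] H | IsPosDef A} := by
  simpa only [isPosDef_iff_isStrictlyPositive] using convex_setOf_isStrictlyPositive

theorem IsPosDef.add_smul_one {A : H →L[ℂ] H} (hA : IsPosDef A) {μ : ℝ} (hμ : 0 ≤ μ) :
    IsPosDef (A + μ • 1) :=
  isPosDef_iff_isStrictlyPositive.2 <|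
    (isPosDef_iff_isStrictlyPositive.1 hA).add_nonneg (smul_nonneg hμ zero_le_one)

namespace OrderedMean

theorem concaveOn (G : OrderedMean H) {k : ℕ} {l : Fin k → ℝ} (hl : IsProbVec l) :
    ConcaveOn ℝ (univ.pi fun _ => {A | IsPosDef A}) (G.G k l) := by
  refine ⟨convex_pi fun _ _ => convex_setOf_isPosDef, fun A hA B hB a b _ hb hab => ?_⟩
  obtain rfl : a = 1 - b := by linarith
  exact G.concave k l A B b hl (by simpa using hA) (by simpa using hB) hb (by linarith)

theorem pMean_of_nonneg (G : OrderedMean H) {μ : ℝ} (hμ : 0 ≤ μ) (k : ℕ) (l : Fin k → ℝ)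
    (A : Fin k → H →L[ℂ] H) : G.pMean μ k l A = G.G k l (fun j => A j + μ • 1) - μ • 1 :=
  if_pos hμ

end OrderedMean

theorem pMean_concave_mixture (G : OrderedMean H) {n k : ℕ} (w : Fin n → ℝ)
    (l : Fin k → ℝ) (hw : IsProbVec w) (hl : IsProbVec l)
    (A : Fin n → Fin k → (H →L[ℂ] H)) (hA : ∀ i j, IsPosDef (A i j))
    (μ : Fin n → ℝ) (hμ : ∀ i, 0 ≤ μ i) :
    ∑ i, w i • G.pMean (μ i) k l (A i) ≤
      G.pMean (∑ i, w i * μ i) k l (fun j => ∑ i, w i • A i j) := by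
  set B : Fin n → Fin k → H →L[ℂ] H := fun i j => A i j + μ i • 1
  have jensen : ∑ i, w i • G.G k l (B i) ≤ G.G k l (∑ i, w i • B i) :=
    (G.concaveOn hl).le_map_sum (fun i _ => (hw.1 i).le) hw.2
      fun i _ => mem_univ_pi.2 fun j => (hA i j).add_smul_one (hμ i)
  have hmix : ∑ i, w i • B i = fun j => ∑ i, w i • A i j + (∑ i, w i * μ i) • 1 := by
    ext j : 1
    simp [B, Finset.sum_apply, smul_add, Finset.sum_add_distrib, Finset.sum_smul, smul_smul]
  rw [G.pMean_of_nonneg (Finset.sum_nonneg fun i _ => mul_nonneg (hw.1 i).le (hμ i)), ← hmix]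
  simp only [G.pMean_of_nonneg (hμ _), smul_sub, Finset.sum_sub_distrib, smul_smul,
    ← Finset.sum_smul]
  exact sub_le_sub_right jensen _
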